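/- arXiv:1409.0309 — 4 statements merged into one kernel-verified Lean document; each statement's English description precedes it below -/
import Mathlib

section
/- Let the machine M be FTA-compliant with the election architectural specification (EE, C_EE), and let v be a voter. For every voter permutation P with P(v) = v, if π(q) = P(π(p)), then for all α ∈ A*, M,π,α ⊨ ¬K_v ¬p → ¬K_v ¬q. -/
structure Machine (S A D O : Type) where
  s0 : S
  step : S → A → S
  dom : A → D
  obs : D → S → O

namespace Machine

def run {S A D O : Type} (M : Machine S A D O) (α : List A) : S :=
  α.foldl M.step M.s0

end Machine
/-- Elements of a view: actions or (group) observations. -/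
inductive VE (A O' : Type) where
  | act : A → VE A O'
  | obs : O' → VE A O'

open Classical in
/-- Absorptive concatenation: `σ ∘ x` is `σ` if `x` equals the last element of `σ`,
and `σ ++ [x]` otherwise. -/
noncomputable def absorb {X : Type} (σ : List X) (x : X) : List X :=
  if σ.getLast? = some x then σ else σ ++ [x]

open Classical in
/-- View of a group `G`, computed on the reversed action sequence. -/
noncomputable def viewR {S A D O : Type} (M : Machine S A D O) (G : Set D) :
    List A → List (VE A (G → O))
  | [] => [VE.obs (fun u : G => M.obs u.1 M.s0)]
  | a :: ρ =>
    let o : VE A (G → O) := VE.obs (fun u : G => M.obs u.1 (M.run ((a :: ρ).reverse)))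
    if M.dom a ∈ G then viewR M G ρ ++ [VE.act a, o] else absorb (viewR M G ρ) o

/-- The view of group `G` of the action sequence `α`. -/
noncomputable def view {S A D O : Type} (M : Machine S A D O) (G : Set D) (α : List A) :
    List (VE A (G → O)) :=
  viewR M G α.reverse
/-- Formulas of the epistemic logic (without distributed knowledge). -/
inductive Formula (PC D : Type) where
  | tru : Formula PC D
  | atom : PC → Formula PC D
  | neg : Formula PC D → Formula PC D
  | conj : Formula PC D → Formula PC D → Formula PC D
  | know : Set D → Formula PC D → Formula PC D

/-- Satisfaction relation `M,π,α ⊨ φ`. -/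
def sat {S A D O PC : Type} (M : Machine S A D O) (π : PC → Set (List A)) :
    List A → Formula PC D → Prop
  | _, .tru => True
  | α, .atom p => α ∈ π p
  | α, .neg φ => ¬ sat M π α φ
  | α, .conj φ ψ => sat M π α φ ∧ sat M π α ψ
  | α, .know G φ => ∀ α', view M G α' = view M G α → sat M π α' φ
/-- An extended architecture: `edge u v = none` means no edge, `edge u v = some none`
means an edge labelled `⊤`, and `edge u v = some (some f)` means an edge labelled by
the filter-function name `f`.  There is at most one label per ordered pair by
construction, and the relation is reflexive with label `⊤`. -/
structure ExtArch (D L : Type) where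
  edge : D → D → Option (Option L)
  refl : ∀ u, edge u u = some none

/-- Values of the `tf` function and of filter-function interpretations:
`eps` is the empty value ε, `base v` an arbitrary basic value, and
`pair σ a` the pair `(σ, a)` of a `tf` value and an action. -/
inductive TFVal (A V : Type) where
  | eps : TFVal A V
  | base : V → TFVal A V
  | pair : List (TFVal A V) → A → TFVal A V

/-- `σ ⌢ x`: appends `x` as a single new last element unless `x = ε`. -/
def snoc' {A V : Type} (σ : List (TFVal A V)) : TFVal A V → List (TFVal A V)
  | .eps => σ
  | x => σ ++ [x]

/-- `tf`, computed on the reversed action sequence. -/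
def tfR {A D L V : Type} (Arch : ExtArch D L) (dm : A → D)
    (I : L → List A → A → TFVal A V) : List A → D → List (TFVal A V)
  | [], _ => []
  | a :: ρ, u =>
    match Arch.edge (dm a) u with
    | none => tfR Arch dm I ρ u
    | some none => tfR Arch dm I ρ u ++ [TFVal.pair (tfR Arch dm I ρ (dm a)) a]
    | some (some f) => snoc' (tfR Arch dm I ρ u) (I f ρ.reverse a)

/-- `tf Arch dm I α u` : maximal information domain `u` is permitted to have after `α`. -/
def tf {A D L V : Type} (Arch : ExtArch D L) (dm : A → D)
    (I : L → List A → A → TFVal A V) (α : List A) (u : D) : List (TFVal A V) :=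
  tfR Arch dm I α.reverse u

/-- `inF Arch dm I α a u` : the information `in_{dom(a),u}(α, a)` transmitted to `u`
when action `a` is performed after `α`. -/
def inF {A D L V : Type} (Arch : ExtArch D L) (dm : A → D)
    (I : L → List A → A → TFVal A V) (α : List A) (a : A) (u : D) : TFVal A V :=
  match Arch.edge (dm a) u with
  | none => TFVal.eps
  | some none => TFVal.pair (tf Arch dm I α (dm a)) a
  | some (some f) => I f α a
/-- FTA-compliance of a machine with an interpreted extended architecture
(whose actions, domains and domain function are those of the machine). -/
def FTACompliant {S A D O L V : Type} (M : Machine S A D O) (Arch : ExtArch D L)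
    (I : L → List A → A → TFVal A V) : Prop :=
  ∀ (u : D) (α α' : List A), tf Arch M.dom I α u = tf Arch M.dom I α' u →
    M.obs u (M.run α) = M.obs u (M.run α')
/-- Domains of the election architecture: the voters and the election
authority. -/
inductive EEDom (Vt : Type) where
  | voter : Vt → EEDom Vt
  | auth : EEDom Vt

open Classical in
/-- The election extended architecture: reflexive `⊤`-edges, `v ↝_⊤ ElecAuth`
for each voter `v`, and `ElecAuth ↝_results v` for each voter `v` (the label
set is `Unit`, with `()` standing for `results`). -/
noncomputable def EEArch (Vt : Type) : ExtArch (EEDom Vt) Unit where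
  edge u v :=
    match u, v with
    | .voter a, .voter b => if a = b then some none else none
    | .voter _, .auth => some none
    | .auth, .voter _ => some (some ())
    | .auth, .auth => some none
  refl u := by cases u <;> simp

open Classical in
/-- The action of a voter permutation `P` on a single action: an action of the
form `act t v` (type `t` performed by voter `v`) is mapped to `act t (P v)`;
all other actions are fixed. -/
noncomputable def permA {Vt AV A : Type} (act : AV → Vt → A) (P : Equiv.Perm Vt)
    (a : A) : A :=
  if h : ∃ v : Vt, ∃ t : AV, act t v = a then
    act h.choose_spec.choose (P h.choose)
  else a

/-- The action of a voter permutation on a sequence of actions. -/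
noncomputable def permSeq {Vt AV A : Type} (act : AV → Vt → A) (P : Equiv.Perm Vt)
    (α : List A) : List A :=
  α.map (permA act P)

/-!
A voter permutation `P` fixing `v` only renames actions that `v` cannot see: actions of
other voters stay actions of other voters, while `v`'s own actions and the authority's
actions are left unchanged. The authority reports to `v` only through the `results`
filter, which is identity-oblivious (A1). Hence `tf_v` is invariant under `P`, so by
FTA-compliance `v`'s observations are, and therefore so is `v`'s view. Consequently `P` maps
a `v`-indistinguishable witness of `p` to a `v`-indistinguishable witness of `q`.
-/

theorem view_map_eq_of_invisible {S A D O : Type} (M : Machine S A D O) (G : Set D)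
    (f : A → A) (hobs : ∀ u ∈ G, ∀ β, M.obs u (M.run (β.map f)) = M.obs u (M.run β))
    (hmem : ∀ a, M.dom (f a) ∈ G ↔ M.dom a ∈ G) (hfix : ∀ a, M.dom a ∈ G → f a = a)
    (α : List A) : view M G (α.map f) = view M G α := by
  unfold view
  rw [← List.map_reverse]
  induction α.reverse with
  | nil => rfl
  | cons a ρ ih =>
    have hobs_last : (fun u : G => M.obs u.1 (M.run (f a :: ρ.map f).reverse)) =
        fun u : G => M.obs u.1 (M.run (a :: ρ).reverse) := by
      funext u
      rw [← List.map_cons, ← List.map_reverse, hobs u.1 u.2]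
    simp only [List.map_cons, viewR, hobs_last, ih]
    by_cases h : M.dom a ∈ G
    · rw [if_pos ((hmem a).2 h), if_pos h, hfix a h]
    · rw [if_neg (mt (hmem a).1 h), if_neg h]

section VoterPermutation

variable {S A O V Vt AV : Type} {M : Machine S A (EEDom Vt) O} {act : AV → Vt → A}
  (P : Equiv.Perm Vt)

theorem permA_act (hinj : ∀ (t t' : AV) (v v' : Vt), act t v = act t' v' → t = t' ∧ v = v')
    (t : AV) (w : Vt) : permA act P (act t w) = act t (P w) := by
  have h : ∃ v : Vt, ∃ t' : AV, act t' v = act t w := ⟨w, t, rfl⟩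
  obtain ⟨ht, hw⟩ := hinj _ _ _ _ h.choose_spec.choose_spec
  rw [permA, dif_pos h, ht, hw]

variable (hdom : ∀ (t : AV) (v : Vt), M.dom (act t v) = EEDom.voter v)
  (hinj : ∀ (t t' : AV) (v v' : Vt), act t v = act t' v' → t = t' ∧ v = v')
include hdom hinj

theorem permA_eq_self_or_dom (a : A) :
    permA act P a = a ∨
      ∃ w, M.dom a = EEDom.voter w ∧ M.dom (permA act P a) = EEDom.voter (P w) := by
  by_cases h : ∃ w t, act t w = a
  · obtain ⟨w, t, rfl⟩ := h
    exact Or.inr ⟨w, hdom t w, by rw [permA_act P hinj, hdom]⟩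
  · exact Or.inl (dif_neg h)

theorem permA_eq_self {a : A} (h : ∀ w, M.dom a = EEDom.voter w → P w = w) :
    permA act P a = a := by
  by_cases hact : ∃ w t, act t w = a
  · obtain ⟨w, t, rfl⟩ := hact
    rw [permA_act P hinj, h w (hdom t w)]
  · exact dif_neg hact

variable {v : Vt} (hPv : P v = v)
include hPv

theorem dom_permA_eq_voter_iff (a : A) :
    M.dom (permA act P a) = EEDom.voter v ↔ M.dom a = EEDom.voter v := by
  rcases permA_eq_self_or_dom P hdom hinj a with hfix | ⟨w, hw, hpw⟩
  · rw [hfix]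
  · simp only [hw, hpw, EEDom.voter.injEq, P.injective.eq_iff' hPv]

theorem permA_eq_self_of_dom_eq_voter {a : A} (ha : M.dom a = EEDom.voter v) :
    permA act P a = a :=
  permA_eq_self P hdom hinj fun w hw => by
    rw [ha, EEDom.voter.injEq] at hw
    rw [← hw, hPv]

theorem EEArch_edge_dom_permA (a : A) :
    (EEArch Vt).edge (M.dom (permA act P a)) (EEDom.voter v) =
      (EEArch Vt).edge (M.dom a) (EEDom.voter v) := by
  rcases permA_eq_self_or_dom P hdom hinj a with hfix | ⟨w, hw, hpw⟩
  · rw [hfix]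
  · by_cases hwv : w = v <;> simp [EEArch, hw, hpw, hwv, P.injective.eq_iff' hPv]

theorem tf_permSeq_voter (I : Unit → List A → A → TFVal A V)
    (hA1 : ∀ (α : List A) (a : A), M.dom a = EEDom.auth →
      I () α a = I () (permSeq act P α) a)
    (α : List A) :
    tf (EEArch Vt) M.dom I (permSeq act P α) (EEDom.voter v) =
      tf (EEArch Vt) M.dom I α (EEDom.voter v) := by
  unfold tf permSeq
  rw [← List.map_reverse]
  induction α.reverse with
  | nil => rfl
  | cons a ρ ih =>
    simp only [List.map_cons, tfR]
    rw [EEArch_edge_dom_permA P hdom hinj hPv]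
    rcases hd : M.dom a with w | _
    · by_cases hw : w = v
      · subst hw
        rw [permA_eq_self_of_dom_eq_voter P hdom hinj hPv hd, hd, (EEArch Vt).refl]
        dsimp only
        rw [ih]
      · have hedge : (EEArch Vt).edge (EEDom.voter w) (EEDom.voter v) = none := if_neg hw
        rw [hedge]
        exact ih
    · have hfix : permA act P a = a :=
        permA_eq_self P hdom hinj fun _ hw' => by cases hd.symm.trans hw'
      have hedge : (EEArch Vt).edge EEDom.auth (EEDom.voter v) = some (some ()) := rfl
      rw [hedge, hfix, ih]
      dsimp only
      rw [hA1 ρ.reverse a hd, permSeq, List.map_reverse]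

theorem view_permSeq_voter (I : Unit → List A → A → TFVal A V)
    (hA1 : ∀ (α : List A) (a : A), M.dom a = EEDom.auth →
      I () α a = I () (permSeq act P α) a)
    (hFTA : FTACompliant M (EEArch Vt) I) (α : List A) :
    view M {EEDom.voter v} (permSeq act P α) = view M {EEDom.voter v} α := by
  refine view_map_eq_of_invisible M _ _ (fun u hu β => ?_)
    (dom_permA_eq_voter_iff P hdom hinj hPv)
    (fun a ha => permA_eq_self_of_dom_eq_voter P hdom hinj hPv ha) α
  rw [Set.mem_singleton_iff.mp hu]
  exact hFTA _ _ _ (tf_permSeq_voter P hdom hinj hPv I hA1 β)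

end VoterPermutation

theorem statement13_general {S A O V Vt AV PC : Type} (M : Machine S A (EEDom Vt) O)
    (act : AV → Vt → A)
    (hdom : ∀ (t : AV) (v : Vt), M.dom (act t v) = EEDom.voter v)
    (hinj : ∀ (t t' : AV) (v v' : Vt), act t v = act t' v' → t = t' ∧ v = v')
    (I : Unit → List A → A → TFVal A V)
    (hA1 : ∀ (P : Equiv.Perm Vt) (α : List A) (a : A), M.dom a = EEDom.auth →
      I () α a = I () (permSeq act P α) a)
    (hFTA : FTACompliant M (EEArch Vt) I)
    (v : Vt) (P : Equiv.Perm Vt) (hPv : P v = v)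
    (π : PC → Set (List A)) (p q : PC)
    (hq : π q = permSeq act P '' π p) :
    ∀ α : List A,
      sat M π α (Formula.neg
        (Formula.know {EEDom.voter v} (Formula.neg (Formula.atom p)))) →
      sat M π α (Formula.neg
        (Formula.know {EEDom.voter v} (Formula.neg (Formula.atom q)))) := by
  intro α hp_considered hknows_not_q
  apply hp_considered
  intro α' hview hp
  refine hknows_not_q (permSeq act P α') ?_ ?_
  · rw [view_permSeq_voter P hdom hinj hPv I (hA1 P) hFTA, hview]
  · show permSeq act P α' ∈ π q
    exact hq ▸ ⟨α', hp, rfl⟩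

/-- if `M` is FTA-compliant with `(EE, C_EE)`, `v` is a voter,
`P` a voter permutation with `P(v) = v`, and `π(q) = P(π(p))`, then
`M,π,α ⊨ ¬K_v ¬p → ¬K_v ¬q` for all `α`. -/
theorem statement13 {S A O V Vt AV PC : Type} (M : Machine S A (EEDom Vt) O)
    (act : AV → Vt → A)
    (hdom : ∀ (t : AV) (v : Vt), M.dom (act t v) = EEDom.voter v)
    (hsurj : ∀ (a : A) (v : Vt), M.dom a = EEDom.voter v → ∃ t : AV, act t v = a)
    (hinj : ∀ (t t' : AV) (v v' : Vt), act t v = act t' v' → t = t' ∧ v = v')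
    (I : Unit → List A → A → TFVal A V)
    (hA1 : ∀ (P : Equiv.Perm Vt) (α : List A) (a : A), M.dom a = EEDom.auth →
      I () α a = I () (permSeq act P α) a)
    (hFTA : FTACompliant M (EEArch Vt) I)
    (v : Vt) (P : Equiv.Perm Vt) (hPv : P v = v)
    (π : PC → Set (List A)) (p q : PC)
    (hq : π q = permSeq act P '' π p) :
    ∀ α : List A,
      sat M π α (Formula.neg
        (Formula.know {EEDom.voter v} (Formula.neg (Formula.atom p)))) →
      sat M π α (Formula.neg
        (Formula.know {EEDom.voter v} (Formula.neg (Formula.atom q)))) :=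
  statement13_general M act hdom hinj I hA1 hFTA v P hPv π p q hq
end

section
/- If 𝒜ℐ₁ ≼_r 𝒜ℐ₂ (r is a semantic refinement mapping from 𝒜ℐ₁ to 𝒜ℐ₂), then for every machine M: if M is FTA-compliant with 𝒜ℐ₁, then r(M) is FTA-compliant with 𝒜ℐ₂. -/
open Classical in
/-- The machine `r(M)`: same states and transitions, domains `D₂`, domain
function `r ∘ dom`, and observation of `u ∈ D₂` the tuple of observations of
the domains in `r⁻¹(u)` (encoded as a partial function on `D₁`). -/
noncomputable def rMachine {S A D₁ D₂ O : Type} (M : Machine S A D₁ O) (r : D₁ → D₂) :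
    Machine S A D₂ (D₁ → Option O) where
  s0 := M.s0
  step := M.step
  dom := r ∘ M.dom
  obs := fun u s v => if r v = u then some (M.obs v s) else none
/-- `r` is a semantic refinement mapping from `(A₁, dm₁, I₁)` to `(A₂, dm₂, I₂)`. -/
def SemRef {A D₁ D₂ L₁ L₂ V₁ V₂ : Type} (A₁ : ExtArch D₁ L₁) (dm₁ : A → D₁)
    (I₁ : L₁ → List A → A → TFVal A V₁) (A₂ : ExtArch D₂ L₂) (dm₂ : A → D₂)
    (I₂ : L₂ → List A → A → TFVal A V₂) (r : D₁ → D₂) : Prop :=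
  Function.Surjective r ∧ dm₂ = r ∘ dm₁ ∧
    ∀ (u : D₁) (α β : List A),
      tf A₂ dm₂ I₂ α (r u) = tf A₂ dm₂ I₂ β (r u) →
        tf A₁ dm₁ I₁ α u = tf A₁ dm₁ I₁ β u

section rMachine

variable {S A D₁ D₂ O : Type} (M : Machine S A D₁ O) (r : D₁ → D₂)

theorem rMachine_run (α : List A) : (rMachine M r).run α = M.run α := rfl

theorem rMachine_obs_congr {u : D₂} {s s' : S}
    (h : ∀ v, r v = u → M.obs v s = M.obs v s') :
    (rMachine M r).obs u s = (rMachine M r).obs u s' := by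
  funext v
  by_cases hv : r v = u <;> simp [rMachine, hv, h]

end rMachine

/-- if `r` is a semantic refinement mapping from `𝒜ℐ₁` to `𝒜ℐ₂`,
then FTA-compliance of `M` with `𝒜ℐ₁` implies FTA-compliance of `r(M)` with
`𝒜ℐ₂`. -/
theorem statement14 {S A D₁ D₂ O L₁ L₂ V₁ V₂ : Type} (M : Machine S A D₁ O)
    (A₁ : ExtArch D₁ L₁) (I₁ : L₁ → List A → A → TFVal A V₁)
    (A₂ : ExtArch D₂ L₂) (dm₂ : A → D₂) (I₂ : L₂ → List A → A → TFVal A V₂)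
    (r : D₁ → D₂)
    (href : SemRef A₁ M.dom I₁ A₂ dm₂ I₂ r)
    (hFTA : FTACompliant M A₁ I₁) :
    FTACompliant (rMachine M r) A₂ I₂ := by
  obtain ⟨-, rfl, hrefines⟩ := href
  intro u α α' htf
  rw [rMachine_run, rMachine_run]
  apply rMachine_obs_congr
  rintro v rfl
  exact hFTA v α α' (hrefines v α α' htf)
end

section
/- Suppose 𝒜ℐ₁ and 𝒜ℐ₂ are interpreted extended architectures such that 𝒜ℐ₁ ≼_r 𝒜ℐ₂. Let π be an interpretation for these architectures, and let φ be a formula for the domains of 𝒜ℐ₂ (not containing distributed knowledge operators). If 𝒜ℐ₂, π ⊨ φ, then 𝒜ℐ₁, π ⊨ r⁻¹(φ). -/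
/-- `r⁻¹(φ)`: replace every group `G` in a knowledge operator by `r⁻¹(G)`. -/
def rinv {PC D₁ D₂ : Type} (r : D₁ → D₂) : Formula PC D₂ → Formula PC D₁
  | .tru => .tru
  | .atom p => .atom p
  | .neg φ => .neg (rinv r φ)
  | .conj φ ψ => .conj (rinv r φ) (rinv r ψ)
  | .know G φ => .know (r ⁻¹' G) (rinv r φ)

/-- `𝒜ℐ, π ⊨ φ`: every machine FTA-compliant with the interpreted architecture
satisfies `φ` at every sequence of actions. -/
def ArchValid {A D L V PC : Type} (Arch : ExtArch D L) (dm : A → D)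
    (I : L → List A → A → TFVal A V) (π : PC → Set (List A))
    (φ : Formula PC D) : Prop :=
  ∀ (S O : Type) (M : Machine S A D O), M.dom = dm → FTACompliant M Arch I →
    ∀ α : List A, sat M π α φ

/-!
Given a machine `M` FTA-compliant with `𝒜ℐ₁`, consider `r(M)`, in which `u ∈ D₂` observes the
observations of its whole fiber `r⁻¹(u)`. Whenever `tf²_{r(v)}` agrees on two runs, so does
`tf¹_v` by refinement, hence so does `obs_v`; thus `r(M)` is FTA-compliant with `𝒜ℐ₂` and
satisfies `φ`. The view of a group `G` in `r(M)` is an injective recoding of the view of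
`r⁻¹(G)` in `M`, so the knowledge operators `K_G` in `r(M)` and `K_{r⁻¹(G)}` in `M` coincide,
and `r(M)` satisfies `φ` exactly where `M` satisfies `r⁻¹(φ)`.
-/

lemma absorb_map {X Y : Type} {f : X → Y} (hf : Function.Injective f) (σ : List X) (x : X) :
    absorb (σ.map f) (f x) = (absorb σ x).map f := by
  unfold absorb
  rw [List.getLast?_map]
  rcases σ.getLast? with _ | y
  · simp
  · by_cases hxy : y = x
    · simp [hxy]
    · simp [hxy, hf.ne hxy]

def VE.map {A O₁ O₂ : Type} (f : O₁ → O₂) : VE A O₁ → VE A O₂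
  | .act a => .act a
  | .obs o => .obs (f o)

lemma VE.map_injective {A O₁ O₂ : Type} {f : O₁ → O₂} (hf : Function.Injective f) :
    Function.Injective (VE.map (A := A) f) := by
  rintro (a | o) (a' | o') h <;> simp_all [VE.map, hf.eq_iff]

section ViewRecoding

variable {S A D D' O O' : Type} (M : Machine S A D O) (M' : Machine S A D' O')
  (G : Set D) (G' : Set D') {f : (G → O) → (G' → O')}

lemma viewR_eq_map_of_recoding (hf : Function.Injective f)
    (hrun : ∀ α, M'.run α = M.run α) (hdom : ∀ a, M'.dom a ∈ G' ↔ M.dom a ∈ G)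
    (hobs : ∀ s, (fun u : G' => M'.obs u s) = f (fun u : G => M.obs u s)) (ρ : List A) :
    viewR M' G' ρ = (viewR M G ρ).map (VE.map f) := by
  induction ρ with
  | nil =>
    have h0 : M'.s0 = M.s0 := hrun []
    simp only [viewR, List.map_cons, List.map_nil, VE.map, h0, hobs]
  | cons a ρ ih =>
    by_cases ha : M.dom a ∈ G
    · simp only [viewR, (hdom a).mpr ha, ha, if_true, ih, hrun, hobs,
        List.map_append, List.map_cons, List.map_nil, VE.map]
    · have ha' : M'.dom a ∉ G' := fun h => ha ((hdom a).mp h)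
      simp only [viewR, ha, ha', if_false, ih, hrun, hobs]
      exact absorb_map (VE.map_injective hf) _ (VE.obs _)

lemma view_eq_iff_of_recoding (hf : Function.Injective f)
    (hrun : ∀ α, M'.run α = M.run α) (hdom : ∀ a, M'.dom a ∈ G' ↔ M.dom a ∈ G)
    (hobs : ∀ s, (fun u : G' => M'.obs u s) = f (fun u : G => M.obs u s)) (α β : List A) :
    view M' G' α = view M' G' β ↔ view M G α = view M G β := by
  simp only [view, viewR_eq_map_of_recoding M M' G G' hf hrun hdom hobs]
  exact (List.map_injective_iff.mpr (VE.map_injective hf)).eq_iff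

end ViewRecoding

open Classical in
/-- The machine `r(M)`. The tuple `⟨obs_v(s)⟩_{v ∈ r⁻¹(u)}` is encoded as a function on all of
`D₁` that is `none` off the fiber, so that all domains share one observation type. -/
noncomputable def Machine.pushforward {S A D₁ D₂ O : Type} (r : D₁ → D₂)
    (M : Machine S A D₁ O) : Machine S A D₂ (D₁ → Option O) where
  s0 := M.s0
  step := M.step
  dom := r ∘ M.dom
  obs := fun u s v => if r v = u then some (M.obs v s) else none

open Classical in
/-- How the observation of a group `G` in `r(M)` is read off that of `r⁻¹(G)` in `M`. -/
noncomputable def pushforwardGroupObs {D₁ D₂ O : Type} (r : D₁ → D₂) (G : Set D₂)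
    (g : r ⁻¹' G → O) : G → D₁ → Option O :=
  fun u v => if h : r v = u.1 then some (g ⟨v, by simp [h]⟩) else none

lemma pushforwardGroupObs_injective {D₁ D₂ O : Type} (r : D₁ → D₂) (G : Set D₂) :
    Function.Injective (pushforwardGroupObs (O := O) r G) := by
  intro g g' h
  funext ⟨v, hv⟩
  simpa [pushforwardGroupObs] using congrFun (congrFun h ⟨r v, hv⟩) v

namespace Machine.pushforward

variable {S A D₁ D₂ O : Type} (r : D₁ → D₂) (M : Machine S A D₁ O)

lemma run_eq (α : List A) : (M.pushforward r).run α = M.run α := rfl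

open Classical in
lemma obs_apply (u : D₂) (s : S) (v : D₁) :
    (M.pushforward r).obs u s v = if r v = u then some (M.obs v s) else none := rfl

lemma view_eq_iff (G : Set D₂) (α β : List A) :
    view (M.pushforward r) G α = view (M.pushforward r) G β ↔
      view M (r ⁻¹' G) α = view M (r ⁻¹' G) β := by
  refine view_eq_iff_of_recoding M _ _ G (pushforwardGroupObs_injective r G)
    (run_eq r M) (fun _ => Iff.rfl) (fun s => ?_) α β
  funext u v
  by_cases hv : r v = u.1 <;> simp [obs_apply, pushforwardGroupObs, hv]

lemma sat_iff {PC : Type} (π : PC → Set (List A)) (φ : Formula PC D₂) (α : List A) :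
    sat (M.pushforward r) π α φ ↔ sat M π α (rinv r φ) := by
  induction φ generalizing α with
  | tru => simp [sat, rinv]
  | atom p => simp [sat, rinv]
  | neg φ ih => simp [sat, rinv, ih]
  | conj φ ψ ihφ ihψ => simp [sat, rinv, ihφ, ihψ]
  | know G φ ih => simp [sat, rinv, ih, view_eq_iff]

lemma ftaCompliant {L₁ L₂ V₁ V₂ : Type} {A₁ : ExtArch D₁ L₁}
    {I₁ : L₁ → List A → A → TFVal A V₁} {A₂ : ExtArch D₂ L₂} {dm₂ : A → D₂}
    {I₂ : L₂ → List A → A → TFVal A V₂} (href : SemRef A₁ M.dom I₁ A₂ dm₂ I₂ r)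
    (hM : FTACompliant M A₁ I₁) : FTACompliant (M.pushforward r) A₂ I₂ := by
  obtain ⟨-, hdm, htf⟩ := href
  intro u α β htf₂
  funext v
  by_cases hv : r v = u
  · subst hv
    have hobs : M.obs v (M.run α) = M.obs v (M.run β) :=
      hM v α β (htf v α β (hdm ▸ htf₂))
    simp only [obs_apply, run_eq, if_pos, hobs]
  · simp [obs_apply, hv]

end Machine.pushforward

/-- if `𝒜ℐ₁ ≼_r 𝒜ℐ₂` and `𝒜ℐ₂, π ⊨ φ`, then
`𝒜ℐ₁, π ⊨ r⁻¹(φ)`. -/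
theorem statement18 {A D₁ D₂ L₁ L₂ V₁ V₂ PC : Type}
    (A₁ : ExtArch D₁ L₁) (dm₁ : A → D₁) (I₁ : L₁ → List A → A → TFVal A V₁)
    (A₂ : ExtArch D₂ L₂) (dm₂ : A → D₂) (I₂ : L₂ → List A → A → TFVal A V₂)
    (r : D₁ → D₂) (href : SemRef A₁ dm₁ I₁ A₂ dm₂ I₂ r)
    (π : PC → Set (List A)) (φ : Formula PC D₂)
    (h : ArchValid A₂ dm₂ I₂ π φ) :
    ArchValid A₁ dm₁ I₁ π (rinv r φ) := by
  intro S O M hdom hM α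
  subst hdom
  have hdom₂ : (M.pushforward r).dom = dm₂ := href.2.1.symm
  have hM₂ := Machine.pushforward.ftaCompliant r M href hM
  exact (Machine.pushforward.sat_iff r M π φ α).mp (h S _ _ hdom₂ hM₂ α)
end

section
/- Let 𝒜ℐ be a strongly non-conflating interpreted extended architecture. Suppose M is a machine with structured state, with the same actions, domains and domain function as 𝒜ℐ, satisfying conditions RM1, RM2, RM3, AOI′, I1 and I2 with respect to 𝒜ℐ. Then M is FTA-compliant with 𝒜ℐ. -/
/-- A strongly non-conflating interpreted architecture. -/
def StronglyNonConflating {A D L V : Type} (Arch : ExtArch D L) (dm : A → D)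
    (I : L → List A → A → TFVal A V) : Prop :=
  ∀ (u v w : D) (f : L), Arch.edge u w = some (some f) → Arch.edge v w = some none →
    ∀ (a b : A), dm a = u → dm b = v →
      ∀ (α β : List A), I f α a ≠ TFVal.pair (tf Arch dm I β v) b

/-- A compatible interpretation: `𝕀(f)` is `tf_u`-compatible for every edge
`u ↝_f v` with `f ∈ L`. -/
def Compatible {A D L V : Type} (Arch : ExtArch D L) (dm : A → D)
    (I : L → List A → A → TFVal A V) : Prop :=
  ∀ (u v : D) (f : L), Arch.edge u v = some (some f) →
    ∀ (α β : List A), tf Arch dm I α u = tf Arch dm I β u →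
      ∀ (a : A), dm a = u → I f α a = I f β a

/-- A machine with structured state: a machine together with objects, values,
a contents function and access-control functions `observe` and `alter`. -/
structure ACMachine (S A D O Obj Val : Type) extends Machine S A D O where
  contents : S → Obj → Val
  observe : D → Set Obj
  alter : D → Set Obj

/-!
Argue by strong induction on `|α| + |α'|` that equal `tf_u` values force equal contents of
every object `u` observes (RM1 then gives equal observations). A last action whose
transmission to `u` is `ε` changes no object `u` observes: by RM3 if it alters nothing
`u` observes, and otherwise AOI′ provides an edge into `u`, necessarily labelled, so I1
applies. Once such actions are stripped, equal `tf_u` values end in equal transmissions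
produced by prefixes with equal `tf_u`. Strong non-conflation rules out one being a `⊤`
pair and the other a filter value; two `⊤` pairs carry the same action and equal
`tf_{dom(a)}`, so RM2 applies, and two filter values are handled by I2.
-/

namespace Machine

variable {S A D O : Type} (M : Machine S A D O)

theorem run_append_singleton (α : List A) (a : A) :
    M.run (α ++ [a]) = M.step (M.run α) a := by
  simp [run]

end Machine

section TF

variable {A D L V : Type} (Arch : ExtArch D L) (dm : A → D) (I : L → List A → A → TFVal A V)

theorem snoc'_of_ne_eps (σ : List (TFVal A V)) {x : TFVal A V} (hx : x ≠ .eps) :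
    snoc' σ x = σ ++ [x] := by
  cases x <;> simp_all [snoc']

theorem tf_append_singleton (α : List A) (a : A) (u : D) :
    tf Arch dm I (α ++ [a]) u = snoc' (tf Arch dm I α u) (inF Arch dm I α a u) := by
  simp only [tf, inF, List.reverse_append, List.reverse_cons, List.reverse_nil,
    List.nil_append, List.singleton_append, tfR]
  rcases Arch.edge (dm a) u with _ | _ | f <;> simp [snoc']

theorem tf_append_singleton_of_inF_eq_eps {α : List A} {a : A} {u : D}
    (h : inF Arch dm I α a u = .eps) : tf Arch dm I (α ++ [a]) u = tf Arch dm I α u := by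
  rw [tf_append_singleton, h]
  rfl

theorem tf_append_singleton_of_inF_ne_eps {α : List A} {a : A} {u : D}
    (h : inF Arch dm I α a u ≠ .eps) :
    tf Arch dm I (α ++ [a]) u = tf Arch dm I α u ++ [inF Arch dm I α a u] := by
  rw [tf_append_singleton, snoc'_of_ne_eps _ h]

theorem tf_append_singleton_ne_nil {α : List A} {a : A} {u : D}
    (h : inF Arch dm I α a u ≠ .eps) : tf Arch dm I (α ++ [a]) u ≠ [] := by
  simp [tf_append_singleton_of_inF_ne_eps Arch dm I h]

end TF

namespace ACMachine

variable {S A D O Obj Val L V : Type} (M : ACMachine S A D O Obj Val)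
  (Arch : ExtArch D L) (I : L → List A → A → TFVal A V)

/-- `s ≈^{oc}_u t`. -/
def ObsEq (u : D) (s t : S) : Prop :=
  ∀ x ∈ M.observe u, M.contents s x = M.contents t x

def RM2 : Prop :=
  ∀ (a : A) (s t : S) (x : Obj), x ∈ M.alter (M.dom a) → M.ObsEq (M.dom a) s t →
    M.contents s x = M.contents t x → M.contents (M.step s a) x = M.contents (M.step t a) x

def RM3 : Prop :=
  ∀ (a : A) (s : S) (x : Obj), x ∉ M.alter (M.dom a) → M.contents s x = M.contents (M.step s a) x

def AOI' : Prop :=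
  ∀ u v : D, (M.alter u ∩ M.observe v).Nonempty → (Arch.edge u v).isSome = true

def I1 : Prop :=
  ∀ (α : List A) (a : A) (u : D) (f : L) (x : Obj),
    Arch.edge (M.dom a) u = some (some f) → I f α a = TFVal.eps →
    x ∈ M.observe u ∩ M.alter (M.dom a) → M.contents (M.run (α ++ [a])) x = M.contents (M.run α) x

def I2 : Prop :=
  ∀ (α β : List A) (a b : A) (u : D) (f g : L) (x : Obj),
    Arch.edge (M.dom a) u = some (some f) → Arch.edge (M.dom b) u = some (some g) →
    I f α a = I g β b → I f α a ≠ TFVal.eps →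
    x ∈ M.observe u ∩ (M.alter (M.dom a) ∪ M.alter (M.dom b)) →
    M.contents (M.run α) x = M.contents (M.run β) x →
    M.contents (M.run (α ++ [a])) x = M.contents (M.run (β ++ [b])) x

variable {M Arch I}

theorem contents_run_append_of_inF_eq_eps (hRM3 : M.RM3) (hAOI : M.AOI' Arch)
    (hI1 : M.I1 Arch I) {α : List A} {a : A} {u : D} (hin : inF Arch M.dom I α a u = .eps) :
    M.ObsEq u (M.run (α ++ [a])) (M.run α) := by
  intro x hx
  by_cases hxa : x ∈ M.alter (M.dom a)
  · have hedge := hAOI (M.dom a) u ⟨x, hxa, hx⟩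
    rcases h : Arch.edge (M.dom a) u with _ | _ | f
    · simp [h] at hedge
    · simp [inF, h] at hin
    · simp only [inF, h] at hin
      exact hI1 α a u f x h hin ⟨hx, hxa⟩
  · rw [M.run_append_singleton]
    exact (hRM3 a _ x hxa).symm

theorem contents_run_append_of_inF_eq (hRM2 : M.RM2) (hRM3 : M.RM3)
    (hsnc : StronglyNonConflating Arch M.dom I) (hI2 : M.I2 Arch I)
    {α β : List A} {a b : A} {u : D}
    (hagree : ∀ v, tf Arch M.dom I α v = tf Arch M.dom I β v → M.ObsEq v (M.run α) (M.run β))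
    (htf : tf Arch M.dom I α u = tf Arch M.dom I β u)
    (hin : inF Arch M.dom I α a u = inF Arch M.dom I β b u)
    (hne : inF Arch M.dom I α a u ≠ .eps) :
    M.ObsEq u (M.run (α ++ [a])) (M.run (β ++ [b])) := by
  have hframe : ∀ x ∈ M.observe u, x ∉ M.alter (M.dom a) → x ∉ M.alter (M.dom b) →
      M.contents (M.run (α ++ [a])) x = M.contents (M.run (β ++ [b])) x := by
    intro x hx hxa hxb
    rw [M.run_append_singleton, M.run_append_singleton, ← hRM3 a _ x hxa, ← hRM3 b _ x hxb]
    exact hagree u htf x hx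
  rcases ha : Arch.edge (M.dom a) u with _ | _ | f
  · simp [inF, ha] at hne
  all_goals rcases hb : Arch.edge (M.dom b) u with _ | _ | g
  all_goals simp only [inF, ha, hb] at hin hne
  · exact (hne hin).elim
  · obtain ⟨htfa, rfl⟩ := TFVal.pair.inj hin
    intro x hx
    by_cases hxa : x ∈ M.alter (M.dom a)
    · rw [M.run_append_singleton, M.run_append_singleton]
      exact hRM2 a _ _ x hxa (hagree _ htfa) (hagree u htf x hx)
    · exact hframe x hx hxa hxa
  · exact absurd hin.symm (hsnc _ _ u g hb ha b a rfl rfl β α)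
  · exact (hne hin).elim
  · exact absurd hin (hsnc _ _ u f ha hb a b rfl rfl α β)
  · intro x hx
    by_cases hx' : x ∈ M.alter (M.dom a) ∪ M.alter (M.dom b)
    · exact hI2 α β a b u f g x ha hb hin hne ⟨hx, hx'⟩ (hagree u htf x hx)
    · simp only [Set.mem_union, not_or] at hx'
      exact hframe x hx hx'.1 hx'.2

theorem obsEq_run_of_tf_eq (hRM2 : M.RM2) (hRM3 : M.RM3) (hAOI : M.AOI' Arch)
    (hI1 : M.I1 Arch I) (hI2 : M.I2 Arch I) (hsnc : StronglyNonConflating Arch M.dom I)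
    (α β : List A) (u : D) (htf : tf Arch M.dom I α u = tf Arch M.dom I β u) :
    M.ObsEq u (M.run α) (M.run β) := by
  induction hn : α.length + β.length using Nat.strong_induction_on generalizing α β u with
  | _ n IH =>
  have silent {γ : List A} {c : A} (h : inF Arch M.dom I γ c u = .eps) :=
    contents_run_append_of_inF_eq_eps hRM3 hAOI hI1 h
  by_cases hα : ∃ α' a, α = α' ++ [a] ∧ inF Arch M.dom I α' a u = .eps
  · obtain ⟨α, a, rfl, ha⟩ := hα
    rw [tf_append_singleton_of_inF_eq_eps _ _ _ ha] at htf
    exact fun x hx => (silent ha x hx).trans (IH _ (by subst hn; simp) _ _ u htf rfl x hx)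
  by_cases hβ : ∃ β' b, β = β' ++ [b] ∧ inF Arch M.dom I β' b u = .eps
  · obtain ⟨β, b, rfl, hb⟩ := hβ
    rw [tf_append_singleton_of_inF_eq_eps _ _ _ hb] at htf
    exact fun x hx => (IH _ (by subst hn; simp) _ _ u htf rfl x hx).trans (silent hb x hx).symm
  push Not at hα hβ
  rcases List.eq_nil_or_concat' α with rfl | ⟨α, a, rfl⟩ <;>
    rcases List.eq_nil_or_concat' β with rfl | ⟨β, b, rfl⟩
  · exact fun _ _ => rfl
  · exact absurd htf.symm (tf_append_singleton_ne_nil _ _ _ (hβ β b rfl))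
  · exact absurd htf (tf_append_singleton_ne_nil _ _ _ (hα α a rfl))
  · have ha := hα α a rfl
    have hb := hβ β b rfl
    rw [tf_append_singleton_of_inF_ne_eps _ _ _ ha,
      tf_append_singleton_of_inF_ne_eps _ _ _ hb] at htf
    obtain ⟨htf, hin⟩ := List.append_inj' htf rfl
    exact contents_run_append_of_inF_eq hRM2 hRM3 hsnc hI2
      (fun v hv => IH _ (by subst hn; simp; omega) _ _ v hv rfl) htf (List.singleton_inj.mp hin) ha

end ACMachine

theorem statement19_general {S A D O Obj Val L V : Type} (M : ACMachine S A D O Obj Val)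
    (Arch : ExtArch D L) (I : L → List A → A → TFVal A V)
    (hsnc : StronglyNonConflating Arch M.dom I)
    -- RM1
    (hRM1 : ∀ (u : D) (s t : S),
      (∀ x ∈ M.observe u, M.contents s x = M.contents t x) →
      M.obs u s = M.obs u t)
    -- RM2
    (hRM2 : ∀ (a : A) (s t : S) (x : Obj), x ∈ M.alter (M.dom a) →
      (∀ y ∈ M.observe (M.dom a), M.contents s y = M.contents t y) →
      M.contents s x = M.contents t x →
      M.contents (M.step s a) x = M.contents (M.step t a) x)
    -- RM3
    (hRM3 : ∀ (a : A) (s : S) (x : Obj), x ∉ M.alter (M.dom a) →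
      M.contents s x = M.contents (M.step s a) x)
    -- AOI′
    (hAOI : ∀ u v : D, (M.alter u ∩ M.observe v).Nonempty →
      (Arch.edge u v).isSome = true)
    -- I1
    (hI1 : ∀ (α : List A) (a : A) (u : D) (f : L) (x : Obj),
      Arch.edge (M.dom a) u = some (some f) → I f α a = TFVal.eps →
      x ∈ M.observe u ∩ M.alter (M.dom a) →
      M.contents (Machine.run M.toMachine (α ++ [a])) x =
        M.contents (Machine.run M.toMachine α) x)
    -- I2
    (hI2 : ∀ (α β : List A) (a b : A) (u : D) (f g : L) (x : Obj),
      Arch.edge (M.dom a) u = some (some f) →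
      Arch.edge (M.dom b) u = some (some g) →
      I f α a = I g β b → I f α a ≠ TFVal.eps →
      x ∈ M.observe u ∩ (M.alter (M.dom a) ∪ M.alter (M.dom b)) →
      M.contents (Machine.run M.toMachine α) x =
        M.contents (Machine.run M.toMachine β) x →
      M.contents (Machine.run M.toMachine (α ++ [a])) x =
        M.contents (Machine.run M.toMachine (β ++ [b])) x) :
    FTACompliant M.toMachine Arch I :=
  fun u α α' htf =>
    hRM1 u _ _ (M.obsEq_run_of_tf_eq hRM2 hRM3 hAOI hI1 hI2 hsnc α α' u htf)

/-- if `𝒜ℐ` is strongly non-conflating (the interpretation being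
compatible) and the machine with structured state `M` satisfies RM1–RM3, AOI′,
I1 and I2 with respect to `𝒜ℐ`, then `M` is FTA-compliant with `𝒜ℐ`. -/
theorem statement19 {S A D O Obj Val L V : Type} (M : ACMachine S A D O Obj Val)
    (Arch : ExtArch D L) (I : L → List A → A → TFVal A V)
    (hcomp : Compatible Arch M.dom I)
    (hsnc : StronglyNonConflating Arch M.dom I)
    -- RM1
    (hRM1 : ∀ (u : D) (s t : S),
      (∀ x ∈ M.observe u, M.contents s x = M.contents t x) →
      M.obs u s = M.obs u t)
    -- RM2
    (hRM2 : ∀ (a : A) (s t : S) (x : Obj), x ∈ M.alter (M.dom a) →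
      (∀ y ∈ M.observe (M.dom a), M.contents s y = M.contents t y) →
      M.contents s x = M.contents t x →
      M.contents (M.step s a) x = M.contents (M.step t a) x)
    -- RM3
    (hRM3 : ∀ (a : A) (s : S) (x : Obj), x ∉ M.alter (M.dom a) →
      M.contents s x = M.contents (M.step s a) x)
    -- AOI′
    (hAOI : ∀ u v : D, (M.alter u ∩ M.observe v).Nonempty →
      (Arch.edge u v).isSome = true)
    -- I1
    (hI1 : ∀ (α : List A) (a : A) (u : D) (f : L) (x : Obj),
      Arch.edge (M.dom a) u = some (some f) → I f α a = TFVal.eps →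
      x ∈ M.observe u ∩ M.alter (M.dom a) →
      M.contents (Machine.run M.toMachine (α ++ [a])) x =
        M.contents (Machine.run M.toMachine α) x)
    -- I2
    (hI2 : ∀ (α β : List A) (a b : A) (u : D) (f g : L) (x : Obj),
      Arch.edge (M.dom a) u = some (some f) →
      Arch.edge (M.dom b) u = some (some g) →
      I f α a = I g β b → I f α a ≠ TFVal.eps →
      x ∈ M.observe u ∩ (M.alter (M.dom a) ∪ M.alter (M.dom b)) →
      M.contents (Machine.run M.toMachine α) x =
        M.contents (Machine.run M.toMachine β) x →
      M.contents (Machine.run M.toMachine (α ++ [a])) x =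
        M.contents (Machine.run M.toMachine (β ++ [b])) x) :
    FTACompliant M.toMachine Arch I :=
  statement19_general M Arch I hsnc hRM1 hRM2 hRM3 hAOI hI1 hI2
end
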